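/- arXiv:math/0312081 — 2 statements merged into one kernel-verified Lean document; each statement's English description precedes it below -/
import Mathlib

section
/- Let μ be a probability measure on a measurable space, h ≥ 0 a measurable function with ∫ h dμ = 1, ν = h·μ, and a > e. Then H(ν,μ) ≥ (1 − 1/log a)·∫_{h > a} h·log h dμ. -/
open MeasureTheory ENNReal
open scoped Classical

noncomputable section

/-- Relative entropy (Kullback-Leibler information) `H(ν,μ)`:
`∫ log (dν/dμ) dν` if `ν ≪ μ` (and the integral exists), `+∞` otherwise. -/
def relEnt {Ω : Type*} [MeasurableSpace Ω] (ν μ : Measure Ω) : ℝ≥0∞ :=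
  if ν ≪ μ ∧ Integrable (fun x => Real.log ((ν.rnDeriv μ) x).toReal) ν
  then ENNReal.ofReal (∫ x, Real.log ((ν.rnDeriv μ) x).toReal ∂ν)
  else ∞

/-- The measure `ν = h·μ`. -/
def densMeas {Ω : Type*} [MeasurableSpace Ω] (μ : Measure Ω) (h : Ω → ℝ) : Measure Ω :=
  μ.withDensity fun x => ENNReal.ofReal (h x)

/-- The truncated measure `ν_a = (1/ν(h ≤ a)) · h · 1_{h ≤ a} · μ` for `ν = h·μ`. -/
def truncMeas {Ω : Type*} [MeasurableSpace Ω] (μ : Measure Ω) (h : Ω → ℝ) (a : ℝ) : Measure Ω :=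
  ((densMeas μ h) {x | h x ≤ a})⁻¹ • (densMeas μ h).restrict {x | h x ≤ a}

/-!
Writing `H(ν,μ) = ∫ φ(h) dμ` with `φ(t) = t log t + 1 - t ≥ 0` (legitimate because `∫ h dμ = 1`),
it suffices to bound `φ(h)` from below on `{h > a}` and drop the rest. There `log h ≥ log a`,
so `h ≤ h log h / log a`, whence `φ(h) ≥ h log h - h ≥ (1 - 1/log a) h log h`.
-/

open InformationTheory

section

variable {Ω : Type*} [MeasurableSpace Ω]

/-- The correction term `ν(Ω) - μ(Ω)` in Mathlib's `klDiv` vanishes. -/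
lemma relEnt_eq_klDiv {ν μ : Measure Ω} (huniv : ν Set.univ = μ Set.univ) :
    relEnt ν μ = klDiv ν μ := by
  rw [relEnt, klDiv_def]
  simp only [Measure.real, huniv, add_sub_cancel_right]
  rfl

lemma relEnt_densMeas_eq_lintegral_klFun (μ : Measure Ω) [IsProbabilityMeasure μ] {h : Ω → ℝ}
    (hmeas : Measurable h) (hpos : ∀ x, 0 ≤ h x) [IsProbabilityMeasure (densMeas μ h)] :
    relEnt (densMeas μ h) μ = ∫⁻ x, ENNReal.ofReal (klFun (h x)) ∂μ := by
  rw [relEnt_eq_klDiv (by simp only [measure_univ]),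
    klDiv_eq_lintegral_klFun_of_ac (μ := densMeas μ h) (withDensity_absolutelyContinuous μ _)]
  refine lintegral_congr_ae ?_
  filter_upwards [Measure.rnDeriv_withDensity μ hmeas.ennreal_ofReal] with x hx
  rw [densMeas, hx, ENNReal.toReal_ofReal (hpos x)]

end

lemma mul_mul_log_le_klFun {a t : ℝ} (ha : 1 < a) (hat : a < t) :
    (1 - 1 / Real.log a) * (t * Real.log t) ≤ klFun t := by
  have hlog_a : 0 < Real.log a := Real.log_pos ha
  have ht : 0 < t := by linarith
  have hle : t ≤ t * Real.log t / Real.log a := by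
    rw [le_div_iff₀ hlog_a]
    exact mul_le_mul_of_nonneg_left (Real.log_le_log (by linarith) hat.le) ht.le
  calc (1 - 1 / Real.log a) * (t * Real.log t)
      = t * Real.log t - t * Real.log t / Real.log a := by ring
    _ ≤ t * Real.log t + 1 - t := by linarith
    _ = klFun t := (klFun_apply t).symm

lemma ofReal_mul_ofReal_mul_log_le_klFun {a t : ℝ} (ha : 1 < a) (hat : a < t) :
    ENNReal.ofReal (1 - 1 / Real.log a) * ENNReal.ofReal (t * Real.log t) ≤
      ENNReal.ofReal (klFun t) := by
  have hmul_log : 0 ≤ t * Real.log t :=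
    mul_nonneg (by linarith) (Real.log_nonneg (by linarith))
  rw [← ENNReal.ofReal_mul' hmul_log]
  exact ENNReal.ofReal_le_ofReal (mul_mul_log_le_klFun ha hat)

/-- **Lemma 3.3 (1).** For `ν = h·μ` and `a > e`,
`H(ν,μ) ≥ (1 - 1/log a) ∫_{h>a} h log h dμ`. -/
theorem entropy_ge_tail_entropy
    {Ω : Type*} [MeasurableSpace Ω] (μ : Measure Ω) (hprob : IsProbabilityMeasure μ)
    (h : Ω → ℝ) (hmeas : Measurable h) (hpos : ∀ x, 0 ≤ h x)
    (hint : IsProbabilityMeasure (densMeas μ h))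
    (a : ℝ) (ha : a > Real.exp 1) :
    ENNReal.ofReal (1 - 1 / Real.log a) *
        ∫⁻ x in {x | a < h x}, ENNReal.ofReal (h x * Real.log (h x)) ∂μ ≤
      relEnt (densMeas μ h) μ := by
  have ha1 : 1 < a := (Real.one_lt_exp_iff.mpr one_pos).trans ha
  calc ENNReal.ofReal (1 - 1 / Real.log a) *
        ∫⁻ x in {x | a < h x}, ENNReal.ofReal (h x * Real.log (h x)) ∂μ
      = ∫⁻ x in {x | a < h x},
          ENNReal.ofReal (1 - 1 / Real.log a) * ENNReal.ofReal (h x * Real.log (h x)) ∂μ :=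
        (lintegral_const_mul' _ _ ofReal_ne_top).symm
    _ ≤ ∫⁻ x in {x | a < h x}, ENNReal.ofReal (klFun (h x)) ∂μ :=
        setLIntegral_mono' (measurableSet_lt measurable_const hmeas)
          fun x hx => ofReal_mul_ofReal_mul_log_le_klFun ha1 hx
    _ ≤ ∫⁻ x, ENNReal.ofReal (klFun (h x)) ∂μ := setLIntegral_le_lintegral _ _
    _ = relEnt (densMeas μ h) μ := (relEnt_densMeas_eq_lintegral_klFun μ hmeas hpos).symm

end
end

section
/- Let (E,d) be a complete separable metric space and μ a Borel probability measure on E satisfying EI_ε(2): ∫ exp(ε·d(x,x₀)²) dμ(x) < ∞ for some ε > 0 and x₀ ∈ E. Then for every a > e^{3/2} there exists a constant c(a) such that for every probability measure ν = h·μ with 0 < H(ν,μ) ≤ 1/2, W₂²(ν,μ) ≤ W₂²(ν_a,μ) + c(a)·H(ν,μ)·log(1/H(ν,μ)). -/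
open MeasureTheory ENNReal
open scoped Classical

noncomputable section

/-- `π` is a coupling of the probability measures `μ` and `ν`:
its marginal distributions are `μ` and `ν`. -/
def IsCoupling {E : Type*} [MeasurableSpace E] (π : Measure (E × E)) (μ ν : Measure E) : Prop :=
  π.map Prod.fst = μ ∧ π.map Prod.snd = ν

/-- The `p`-th power of the `L^p` Wasserstein distance, `W_p^p(μ,ν)`, as the infimum of the
transportation cost over all couplings. -/
def Wcost {E : Type*} [MetricSpace E] [MeasurableSpace E] (p : ℝ) (μ ν : Measure E) : ℝ≥0∞ :=
  ⨅ (π : Measure (E × E)) (_ : IsProbabilityMeasure π) (_ : IsCoupling π μ ν),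
    ∫⁻ z, ENNReal.ofReal (dist z.1 z.2 ^ p) ∂π

/-- The transportation cost inequality `T_p(C)`: `W_p(μ,ν) ≤ √(2 C H(ν,μ))` for every
probability measure `ν`. -/
def TCI {E : Type*} [MetricSpace E] [MeasurableSpace E] (p : ℝ) (C : ℝ) (μ : Measure E) : Prop :=
  ∀ ν : Measure E, IsProbabilityMeasure ν →
    Wcost p μ ν ^ (1 / p) ≤ (ENNReal.ofReal (2 * C) * relEnt ν μ) ^ (1 / 2 : ℝ)

/-!
Glue a coupling of `ν_a` and `μ`, weighted by `ν(h ≤ a)`, with the product coupling of `ν`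
restricted to `{h > a}` and `μ`. This is a coupling of `ν` and `μ` whose extra cost is at most
`2 ∫_{h > a} d(x, x₀)² dν + 2 m ∫ d(y, x₀)² dμ`, where `m = ν(h > a)`; let `H = H(ν, μ)`.
Young's inequality `t u ≤ t log t - t log s + s e^{u - 1}`, with `u = ε d(x, x₀)²` and `s = H`,
bounds the first term by `2ε⁻¹ (∫_{h > a} h log h + m log (1/H) + H ∫ e^{ε d²} dμ)`.
Since `t log t + 1 - t ≥ 0`, both `∫_{h > a} h log h ≤ H + m` and `(log a - 1) m ≤ H`; the
latter gives `m ≤ 2H` once `a > e^{3/2}`, so every term is `O(H log (1/H))`.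
-/

open Real InformationTheory

lemma mul_le_mul_log_sub_mul_log_add_mul_exp {t s : ℝ} (u : ℝ) (ht : 0 ≤ t) (hs : 0 < s) :
    t * u ≤ t * log t - t * log s + s * exp (u - 1) := by
  rcases ht.eq_or_lt with rfl | ht
  · simp only [zero_mul, sub_zero, zero_add]
    positivity
  have key := add_one_le_exp (u - 1 - log (t / s))
  rw [exp_sub, exp_log (div_pos ht hs), log_div ht.ne' hs.ne', le_div_iff₀ (div_pos ht hs)] at key
  field_simp at key
  linarith

lemma le_inv_mul_exp_mul {ε : ℝ} (hε : 0 < ε) (r : ℝ) : r ≤ ε⁻¹ * exp (ε * r) := by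
  rw [le_inv_mul_iff₀ hε]
  linarith [add_one_le_exp (ε * r)]

lemma sq_dist_le_two_mul_sq_add {E : Type*} [PseudoMetricSpace E] (x y z : E) :
    dist x y ^ 2 ≤ 2 * dist x z ^ 2 + 2 * dist y z ^ 2 := by
  nlinarith [dist_triangle_right x y z, dist_nonneg (x := x) (y := y),
    sq_nonneg (dist x z - dist y z)]

lemma lintegral_ofReal_le_ofReal_integral {α : Type*} [MeasurableSpace α] {μ : Measure α}
    {f g : α → ℝ} (hf : 0 ≤ᵐ[μ] f) (hfg : f ≤ᵐ[μ] g) (hg : Integrable g μ) :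
    ∫⁻ x, ENNReal.ofReal (f x) ∂μ ≤ ENNReal.ofReal (∫ x, g x ∂μ) := by
  rw [ofReal_integral_eq_lintegral_ofReal hg (hf.trans hfg)]
  exact lintegral_mono_ae (hfg.mono fun x hx => ENNReal.ofReal_le_ofReal hx)

lemma integrable_exp_sub {α : Type*} [MeasurableSpace α] {μ : Measure α} {f : α → ℝ}
    (hf : Integrable (fun x => exp (f x)) μ) (c : ℝ) : Integrable (fun x => exp (f x - c)) μ := by
  simpa only [exp_sub] using hf.div_const (exp c)

section Density

variable {Ω : Type*} [MeasurableSpace Ω] {μ : Measure Ω} {h : Ω → ℝ}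

lemma densMeas_apply (h0 : ∀ x, 0 ≤ h x) (h_int : Integrable h μ) {s : Set Ω}
    (hs : MeasurableSet s) : densMeas μ h s = ENNReal.ofReal (∫ x in s, h x ∂μ) := by
  rw [densMeas, withDensity_apply _ hs,
    ofReal_integral_eq_lintegral_ofReal h_int.integrableOn (ae_of_all _ h0)]

lemma integrable_of_isFiniteMeasure_densMeas (hh : Measurable h) (h0 : ∀ x, 0 ≤ h x)
    [IsFiniteMeasure (densMeas μ h)] : Integrable h μ := by
  refine ⟨hh.aestronglyMeasurable, (hasFiniteIntegral_iff_ofReal (ae_of_all _ h0)).2 ?_⟩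
  simpa [densMeas] using measure_lt_top (densMeas μ h) Set.univ

lemma integral_eq_one_of_isProbabilityMeasure_densMeas (hh : Measurable h) (h0 : ∀ x, 0 ≤ h x)
    [IsProbabilityMeasure (densMeas μ h)] : ∫ x, h x ∂μ = 1 := by
  have := measure_univ (μ := densMeas μ h)
  rw [← setIntegral_univ, ← ENNReal.toReal_ofReal (integral_nonneg h0),
    ← densMeas_apply h0 (integrable_of_isFiniteMeasure_densMeas hh h0) MeasurableSet.univ,
    this, ENNReal.toReal_one]

lemma relEnt_densMeas [SigmaFinite μ] (hh : Measurable h) (h0 : ∀ x, 0 ≤ h x)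
    (hfin : relEnt (densMeas μ h) μ ≠ ∞) :
    Integrable (fun x => h x * log (h x)) μ ∧
      relEnt (densMeas μ h) μ = ENNReal.ofReal (∫ x, h x * log (h x) ∂μ) := by
  rw [relEnt] at hfin ⊢
  split_ifs at hfin ⊢ with hcond
  · obtain ⟨hac, hint⟩ := hcond
    have hlt : ∀ᵐ x ∂μ, ENNReal.ofReal (h x) < ∞ := ae_of_all _ fun _ => ENNReal.ofReal_lt_top
    have hrn : (fun x => log ((densMeas μ h).rnDeriv μ x).toReal) =ᵐ[densMeas μ h]
        fun x => log (h x) := hac.ae_le <| by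
      filter_upwards [Measure.rnDeriv_withDensity μ hh.ennreal_ofReal] with x hx
      rw [densMeas, hx, ENNReal.toReal_ofReal (h0 x)]
    rw [integrable_congr hrn, densMeas,
      integrable_withDensity_iff_integrable_smul' hh.ennreal_ofReal hlt] at hint
    rw [integral_congr_ae hrn, densMeas,
      integral_withDensity_eq_integral_toReal_smul hh.ennreal_ofReal hlt]
    simpa only [ENNReal.toReal_ofReal (h0 _), smul_eq_mul, and_true] using hint
  · exact absurd rfl hfin

end Density

section KLFun

variable {Ω : Type*} [MeasurableSpace Ω] {μ : Measure Ω} {h : Ω → ℝ}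

lemma integrable_klFun_comp [IsFiniteMeasure μ] (h_int : Integrable h μ)
    (hlog : Integrable (fun x => h x * log (h x)) μ) : Integrable (fun x => klFun (h x)) μ :=
  ((hlog.add (integrable_const 1)).sub h_int).congr (ae_of_all _ fun _ => rfl)

lemma integral_klFun_eq [IsProbabilityMeasure μ] (h_int : Integrable h μ)
    (h_one : ∫ x, h x ∂μ = 1) (hlog : Integrable (fun x => h x * log (h x)) μ) :
    ∫ x, klFun (h x) ∂μ = ∫ x, h x * log (h x) ∂μ := by
  simp only [klFun_apply]
  rw [integral_sub (f := fun x => h x * log (h x) + 1) (hlog.add (integrable_const 1)) h_int,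
    integral_add hlog (integrable_const 1), h_one]
  simp

lemma setIntegral_klFun_le [IsProbabilityMeasure μ] (h0 : ∀ x, 0 ≤ h x)
    (h_int : Integrable h μ) (h_one : ∫ x, h x ∂μ = 1)
    (hlog : Integrable (fun x => h x * log (h x)) μ) (s : Set Ω) :
    ∫ x in s, klFun (h x) ∂μ ≤ ∫ x, h x * log (h x) ∂μ := by
  rw [← integral_klFun_eq h_int h_one hlog]
  exact setIntegral_le_integral (integrable_klFun_comp h_int hlog)
    (ae_of_all _ fun x => klFun_nonneg (h0 x))

lemma setIntegral_mul_log_le [IsProbabilityMeasure μ] (h0 : ∀ x, 0 ≤ h x)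
    (h_int : Integrable h μ) (h_one : ∫ x, h x ∂μ = 1)
    (hlog : Integrable (fun x => h x * log (h x)) μ) (s : Set Ω) :
    ∫ x in s, h x * log (h x) ∂μ ≤ ∫ x, h x * log (h x) ∂μ + ∫ x in s, h x ∂μ := by
  have hkl := integrable_klFun_comp h_int hlog
  calc ∫ x in s, h x * log (h x) ∂μ ≤ ∫ x in s, (klFun (h x) + h x) ∂μ :=
        integral_mono hlog.integrableOn (hkl.add h_int).integrableOn fun x => by
          simp only [klFun_apply]; linarith
    _ ≤ _ := by
        rw [integral_add hkl.integrableOn h_int.integrableOn]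
        gcongr
        exact setIntegral_klFun_le h0 h_int h_one hlog s

lemma mul_setIntegral_le [IsProbabilityMeasure μ] {a : ℝ} (ha : 0 < a) (h0 : ∀ x, 0 ≤ h x)
    (h_int : Integrable h μ) (h_one : ∫ x, h x ∂μ = 1)
    (hlog : Integrable (fun x => h x * log (h x)) μ) {s : Set Ω} (hs : MeasurableSet s)
    (has : ∀ x ∈ s, a < h x) :
    (log a - 1) * ∫ x in s, h x ∂μ ≤ ∫ x, h x * log (h x) ∂μ := by
  rw [← integral_const_mul]
  refine (setIntegral_mono_on (h_int.const_mul _).integrableOn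
    (integrable_klFun_comp h_int hlog).integrableOn hs fun x hx => ?_).trans
    (setIntegral_klFun_le h0 h_int h_one hlog s)
  have := log_le_log ha (has x hx).le
  rw [klFun_apply]
  nlinarith [h0 x]

end KLFun

section Coupling

variable {E : Type*} [MeasurableSpace E] {μ ν : Measure E}

lemma IsCoupling.isProbabilityMeasure [IsProbabilityMeasure μ] {γ : Measure (E × E)}
    (hγ : IsCoupling γ μ ν) : IsProbabilityMeasure γ := by
  constructor
  rw [← Set.preimage_univ (f := Prod.fst), ← Measure.map_apply measurable_fst MeasurableSet.univ,
    hγ.1, measure_univ]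

lemma isCoupling_smul_add_prod [IsProbabilityMeasure μ] [IsProbabilityMeasure ν] {S : Set E}
    (hS : MeasurableSet S) (hνS : ν S ≠ 0) {γ : Measure (E × E)}
    (hγ : IsCoupling γ ((ν S)⁻¹ • ν.restrict S) μ) :
    IsCoupling (ν S • γ + (ν.restrict Sᶜ).prod μ) ν μ := by
  constructor
  · rw [Measure.map_add _ _ measurable_fst, Measure.map_smul, hγ.1, Measure.map_fst_prod,
      measure_univ, one_smul, smul_smul, ENNReal.mul_inv_cancel hνS (measure_ne_top ν S),
      one_smul, Measure.restrict_add_restrict_compl hS]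
  · rw [Measure.map_add _ _ measurable_snd, Measure.map_smul, hγ.2, Measure.map_snd_prod,
      Measure.restrict_apply_univ, ← add_smul, measure_add_measure_compl hS, measure_univ,
      one_smul]

theorem wcost_le_wcost_smul_restrict_add [MetricSpace E] (p : ℝ) [IsProbabilityMeasure μ]
    [IsProbabilityMeasure ν] {S : Set E} (hS : MeasurableSet S) (hνS : ν S ≠ 0) :
    Wcost p ν μ ≤ Wcost p ((ν S)⁻¹ • ν.restrict S) μ +
      ∫⁻ x in Sᶜ, ∫⁻ y, ENNReal.ofReal (dist x y ^ p) ∂μ ∂ν := by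
  simp only [Wcost, ENNReal.iInf_add]
  refine le_iInf fun γ => le_iInf fun _ => le_iInf fun hγ => ?_
  have hglue := isCoupling_smul_add_prod hS hνS hγ
  refine (iInf₂_le_of_le _ hglue.isProbabilityMeasure <| iInf_le _ hglue).trans ?_
  rw [lintegral_add_measure, lintegral_smul_measure]
  gcongr
  · exact mul_le_of_le_one_left' prob_le_one
  · exact lintegral_prod_le _

end Coupling

section SecondMoment

variable {E : Type*} [MetricSpace E] [MeasurableSpace E] {μ : Measure E} {ε : ℝ} {x₀ : E}

lemma integrable_sq_dist_of_integrable_exp [OpensMeasurableSpace E] (hε : 0 < ε)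
    (hEI : Integrable (fun x => exp (ε * dist x x₀ ^ 2)) μ) :
    Integrable (fun x => dist x x₀ ^ 2) μ := by
  refine (hEI.const_mul ε⁻¹).mono' ?_ (ae_of_all _ fun x => ?_)
  · exact ((continuous_id.dist continuous_const).pow 2).aestronglyMeasurable
  · rw [norm_of_nonneg (by positivity)]
    exact le_inv_mul_exp_mul hε _

lemma integral_sq_dist_le [OpensMeasurableSpace E] (hε : 0 < ε)
    (hEI : Integrable (fun x => exp (ε * dist x x₀ ^ 2)) μ) :
    ∫ x, dist x x₀ ^ 2 ∂μ ≤ ε⁻¹ * ∫ x, exp (ε * dist x x₀ ^ 2) ∂μ := by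
  rw [← integral_const_mul]
  exact integral_mono (integrable_sq_dist_of_integrable_exp hε hEI) (hEI.const_mul _)
    fun x => le_inv_mul_exp_mul hε _

lemma lintegral_sq_dist_le [IsProbabilityMeasure μ]
    (hM : Integrable (fun y => dist y x₀ ^ 2) μ) (x : E) :
    ∫⁻ y, ENNReal.ofReal (dist x y ^ 2) ∂μ ≤
      ENNReal.ofReal (2 * dist x x₀ ^ 2 + 2 * ∫ y, dist y x₀ ^ 2 ∂μ) := by
  refine (lintegral_ofReal_le_ofReal_integral (g := fun y => 2 * dist x x₀ ^ 2 + 2 * dist y x₀ ^ 2)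
    (ae_of_all _ fun _ => by positivity) (ae_of_all _ fun y => sq_dist_le_two_mul_sq_add x y x₀)
    ((integrable_const _).add (hM.const_mul 2))).trans_eq ?_
  rw [integral_add (integrable_const _) (hM.const_mul 2), integral_const, integral_const_mul]
  simp

lemma integrable_mul_sq_dist [OpensMeasurableSpace E] (hε : 0 < ε)
    (hEI : Integrable (fun x => exp (ε * dist x x₀ ^ 2)) μ) {h : E → ℝ}
    (hh : Measurable h) (h0 : ∀ x, 0 ≤ h x) (hlog : Integrable (fun x => h x * log (h x)) μ) :
    Integrable (fun x => h x * dist x x₀ ^ 2) μ := by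
  have hexp := integrable_exp_sub hEI 1
  refine ((hlog.add hexp).const_mul ε⁻¹).mono'
    (hh.aestronglyMeasurable.mul ((continuous_id.dist continuous_const).pow 2).aestronglyMeasurable)
    (ae_of_all _ fun x => ?_)
  have key := mul_le_mul_log_sub_mul_log_add_mul_exp (ε * dist x x₀ ^ 2) (h0 x) one_pos
  rw [Real.log_one, mul_zero, sub_zero, one_mul] at key
  rw [Pi.add_apply, norm_of_nonneg (by have := h0 x; positivity), le_inv_mul_iff₀ hε]
  linarith

lemma mul_setIntegral_mul_sq_dist_le (hEI : Integrable (fun x => exp (ε * dist x x₀ ^ 2)) μ)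
    {h : E → ℝ} (h0 : ∀ x, 0 ≤ h x) (h_int : Integrable h μ)
    (hlog : Integrable (fun x => h x * log (h x)) μ)
    (hd : Integrable (fun x => h x * dist x x₀ ^ 2) μ) (T : Set E) {s : ℝ} (hs : 0 < s) :
    ε * ∫ x in T, h x * dist x x₀ ^ 2 ∂μ ≤ ∫ x in T, h x * log (h x) ∂μ -
      (∫ x in T, h x ∂μ) * log s + s * ∫ x, exp (ε * dist x x₀ ^ 2) ∂μ := by
  have hexp := integrable_exp_sub hEI 1
  have hexp_le : ∫ x in T, exp (ε * dist x x₀ ^ 2 - 1) ∂μ ≤ ∫ x, exp (ε * dist x x₀ ^ 2) ∂μ :=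
    (setIntegral_le_integral hexp (ae_of_all _ fun _ => (exp_pos _).le)).trans
      (integral_mono hexp hEI fun x => exp_le_exp.2 (by linarith))
  rw [← integral_const_mul]
  calc ∫ x in T, ε * (h x * dist x x₀ ^ 2) ∂μ
      ≤ ∫ x in T, (h x * log (h x) - log s * h x + s * exp (ε * dist x x₀ ^ 2 - 1)) ∂μ :=
        integral_mono (hd.const_mul ε).integrableOn
          ((hlog.sub (h_int.const_mul _)).add (hexp.const_mul s)).integrableOn fun x => by
            have := mul_le_mul_log_sub_mul_log_add_mul_exp (ε * dist x x₀ ^ 2) (h0 x) hs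
            linarith
    _ = ∫ x in T, h x * log (h x) ∂μ - log s * ∫ x in T, h x ∂μ +
          s * ∫ x in T, exp (ε * dist x x₀ ^ 2 - 1) ∂μ := by
        rw [integral_add (f := fun x => h x * log (h x) - log s * h x)
            (hlog.sub (h_int.const_mul _)).integrableOn (hexp.const_mul s).integrableOn,
          integral_sub hlog.integrableOn (h_int.const_mul _).integrableOn, integral_const_mul,
          integral_const_mul]
    _ ≤ _ := by nlinarith

lemma setLIntegral_lintegral_sq_dist_densMeas_le [IsProbabilityMeasure μ]
    (hM : Integrable (fun y => dist y x₀ ^ 2) μ) {h : E → ℝ} (hh : Measurable h)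
    (h0 : ∀ x, 0 ≤ h x) (h_int : Integrable h μ)
    (hd : Integrable (fun x => h x * dist x x₀ ^ 2) μ) {T : Set E} (hT : MeasurableSet T) :
    ∫⁻ x in T, ∫⁻ y, ENNReal.ofReal (dist x y ^ 2) ∂μ ∂densMeas μ h ≤
      ENNReal.ofReal (2 * ∫ x in T, h x * dist x x₀ ^ 2 ∂μ +
        2 * (∫ x in T, h x ∂μ) * ∫ y, dist y x₀ ^ 2 ∂μ) := by
  set M := ∫ y, dist y x₀ ^ 2 ∂μ
  calc ∫⁻ x in T, ∫⁻ y, ENNReal.ofReal (dist x y ^ 2) ∂μ ∂densMeas μ h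
      ≤ ∫⁻ x in T, ENNReal.ofReal (h x) * ENNReal.ofReal (2 * dist x x₀ ^ 2 + 2 * M) ∂μ := by
        rw [densMeas, restrict_withDensity hT]
        exact (lintegral_withDensity_le_lintegral_mul _ hh.ennreal_ofReal _).trans
          (lintegral_mono fun x => mul_le_mul' le_rfl (lintegral_sq_dist_le hM x))
    _ = ∫⁻ x in T, ENNReal.ofReal (2 * (h x * dist x x₀ ^ 2) + 2 * M * h x) ∂μ :=
        lintegral_congr fun x => by rw [← ENNReal.ofReal_mul (h0 x)]; ring_nf
    _ = _ := by
        have hg : Integrable (fun x => 2 * (h x * dist x x₀ ^ 2) + 2 * M * h x) μ :=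
          (hd.const_mul 2).add (h_int.const_mul _)
        rw [← ofReal_integral_eq_lintegral_ofReal hg.integrableOn
          (ae_of_all _ fun x => by have := h0 x; positivity),
          integral_add (hd.const_mul 2).integrableOn (h_int.const_mul _).integrableOn,
          integral_const_mul, integral_const_mul]
        ring_nf

lemma setLIntegral_lintegral_sq_dist_densMeas_le_mul_log [OpensMeasurableSpace E]
    [IsProbabilityMeasure μ] (hε : 0 < ε) (hEI : Integrable (fun x => exp (ε * dist x x₀ ^ 2)) μ)
    {h : E → ℝ} (hh : Measurable h) (h0 : ∀ x, 0 ≤ h x) (h_int : Integrable h μ)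
    (h_one : ∫ x, h x ∂μ = 1) (hlog : Integrable (fun x => h x * log (h x)) μ) {T : Set E}
    (hT : MeasurableSet T) (hH : 0 < ∫ x, h x * log (h x) ∂μ)
    (hH2 : ∫ x, h x * log (h x) ∂μ ≤ 1 / 2)
    (hm : ∫ x in T, h x ∂μ ≤ 2 * ∫ x, h x * log (h x) ∂μ) :
    ∫⁻ x in T, ∫⁻ y, ENNReal.ofReal (dist x y ^ 2) ∂μ ∂densMeas μ h ≤
      ENNReal.ofReal (ε⁻¹ * (16 + 12 * ∫ x, exp (ε * dist x x₀ ^ 2) ∂μ) *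
        (∫ x, h x * log (h x) ∂μ) * Real.log (1 / ∫ x, h x * log (h x) ∂μ)) := by
  have hd := integrable_mul_sq_dist hε hEI hh h0 hlog
  have hY := mul_setIntegral_mul_sq_dist_le hEI h0 h_int hlog hd T hH
  have hεM := (le_inv_mul_iff₀ hε).1 (integral_sq_dist_le hε hEI)
  have hA := setIntegral_mul_log_le h0 h_int h_one hlog T
  have hm0 : 0 ≤ ∫ x in T, h x ∂μ := setIntegral_nonneg hT fun x _ => h0 x
  have hC : 0 ≤ ∫ x, exp (ε * dist x x₀ ^ 2) ∂μ := integral_nonneg fun _ => (exp_pos _).le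
  set H := ∫ x, h x * log (h x) ∂μ
  set C := ∫ x, exp (ε * dist x x₀ ^ 2) ∂μ
  set m := ∫ x in T, h x ∂μ
  have hL : 1 / 2 ≤ -Real.log H := by
    have := log_le_log (by norm_num) ((le_div_iff₀ hH).2 (by linarith) : (2 : ℝ) ≤ 1 / H)
    rw [one_div, Real.log_inv] at this
    linarith [log_two_gt_d9]
  refine (setLIntegral_lintegral_sq_dist_densMeas_le
    (integrable_sq_dist_of_integrable_exp hε hEI) hh h0 h_int hd hT).trans
    (ENNReal.ofReal_le_ofReal ?_)
  rw [one_div, Real.log_inv, show ε⁻¹ * (16 + 12 * C) * H * -log H =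
    (16 + 12 * C) * (H * -log H) / ε by ring, le_div_iff₀ hε]
  nlinarith [mul_le_mul_of_nonneg_left hεM hm0,
    mul_nonneg (sub_nonneg.2 hm) (by linarith : (0 : ℝ) ≤ -log H),
    mul_nonneg hH.le (by linarith : (0 : ℝ) ≤ 2 * -log H - 1),
    mul_nonneg (mul_nonneg hC hH.le) (by linarith : (0 : ℝ) ≤ 2 * -log H - 1),
    mul_nonneg (sub_nonneg.2 hm) hC]

end SecondMoment

theorem wcost_le_wcost_trunc_add_entropy_log_general
    {E : Type*} [MetricSpace E]
    [MeasurableSpace E] [BorelSpace E]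
    (μ : Measure E) (hprob : IsProbabilityMeasure μ)
    (ε : ℝ) (hε : 0 < ε) (x₀ : E)
    (hEI : Integrable (fun x => Real.exp (ε * dist x x₀ ^ 2)) μ) :
    ∀ a > Real.exp (3 / 2), ∃ c : ℝ,
      ∀ h : E → ℝ, Measurable h → (∀ x, 0 ≤ h x) →
        IsProbabilityMeasure (densMeas μ h) →
        0 < relEnt (densMeas μ h) μ → relEnt (densMeas μ h) μ ≤ 1 / 2 →
          Wcost 2 (densMeas μ h) μ ≤
            Wcost 2 (truncMeas μ h a) μ +
              ENNReal.ofReal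
                (c * (relEnt (densMeas μ h) μ).toReal *
                  Real.log (1 / (relEnt (densMeas μ h) μ).toReal)) := by
  intro a ha
  refine ⟨ε⁻¹ * (16 + 12 * ∫ x, exp (ε * dist x x₀ ^ 2) ∂μ), fun h hh h0 hν hpos hle => ?_⟩
  have h_int := integrable_of_isFiniteMeasure_densMeas (μ := μ) hh h0
  have h_one := integral_eq_one_of_isProbabilityMeasure_densMeas (μ := μ) hh h0
  obtain ⟨hlog, hrel⟩ := relEnt_densMeas hh h0 (ne_top_of_le_ne_top (by simp) hle)
  rw [hrel, ENNReal.ofReal_pos] at hpos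
  rw [hrel, ENNReal.ofReal_le_iff_le_toReal (by simp), ENNReal.toReal_div, ENNReal.toReal_one,
    ENNReal.toReal_ofNat] at hle
  rw [hrel, ENNReal.toReal_ofReal hpos.le]
  set S := {x | h x ≤ a}
  have hS : MeasurableSet S := measurableSet_le hh measurable_const
  have hla : 3 / 2 < log a := (lt_log_iff_exp_lt ((exp_pos _).trans ha)).2 ha
  have hma := mul_setIntegral_le ((exp_pos _).trans ha) h0 h_int h_one hlog hS.compl
    fun x hx => not_le.1 hx
  have hm0 : 0 ≤ ∫ x in Sᶜ, h x ∂μ := setIntegral_nonneg hS.compl fun x _ => h0 x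
  have hνS : densMeas μ h S ≠ 0 := by
    rw [densMeas_apply h0 h_int hS, ne_eq, ENNReal.ofReal_eq_zero, not_le]
    nlinarith [integral_add_compl hS h_int]
  calc Wcost 2 (densMeas μ h) μ
      ≤ Wcost 2 (truncMeas μ h a) μ +
          ∫⁻ x in Sᶜ, ∫⁻ y, ENNReal.ofReal (dist x y ^ (2 : ℝ)) ∂μ ∂densMeas μ h :=
        wcost_le_wcost_smul_restrict_add 2 hS hνS
    _ ≤ _ := by
        gcongr
        simpa only [Real.rpow_two] using setLIntegral_lintegral_sq_dist_densMeas_le_mul_log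
          hε hEI hh h0 h_int h_one hlog hS.compl hpos hle (by nlinarith)

/-- **Theorem 1.15 (1).** Under `EI_ε(2)`, for every `a > e^{3/2}` there is `c(a)` such that
for all `ν = h·μ` with `0 < H(ν,μ) ≤ 1/2`,
`W₂²(ν,μ) ≤ W₂²(ν_a,μ) + c(a) H(ν,μ) log(1/H(ν,μ))`. -/
theorem wcost_le_wcost_trunc_add_entropy_log
    {E : Type*} [MetricSpace E] [CompleteSpace E] [TopologicalSpace.SeparableSpace E]
    [MeasurableSpace E] [BorelSpace E]
    (μ : Measure E) (hprob : IsProbabilityMeasure μ)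
    (ε : ℝ) (hε : 0 < ε) (x₀ : E)
    (hEI : Integrable (fun x => Real.exp (ε * dist x x₀ ^ 2)) μ) :
    ∀ a > Real.exp (3 / 2), ∃ c : ℝ,
      ∀ h : E → ℝ, Measurable h → (∀ x, 0 ≤ h x) →
        IsProbabilityMeasure (densMeas μ h) →
        0 < relEnt (densMeas μ h) μ → relEnt (densMeas μ h) μ ≤ 1 / 2 →
          Wcost 2 (densMeas μ h) μ ≤
            Wcost 2 (truncMeas μ h a) μ +
              ENNReal.ofReal
                (c * (relEnt (densMeas μ h) μ).toReal *
                  Real.log (1 / (relEnt (densMeas μ h) μ).toReal)) :=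
  wcost_le_wcost_trunc_add_entropy_log_general μ hprob ε hε x₀ hEI
end
end
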